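/- arXiv:1111.0554 — 5 statements merged into one kernel-verified Lean document; each statement's English description precedes it below -/
import Mathlib

section
/- Let $U$ be a finite connected simple undirected graph with $n$ vertices, diameter $d \geq 2$, and maximum degree $\Delta \geq 2$, satisfying $\Delta^d - 1 < n(\Delta - 1)$. Then for any vertex $v$ and any vertex subset $A$ with $1 \leq |A| \leq \Delta$, there exists a vertex $u \neq v$ with $\mathrm{dist}(u, A) > d - 2$. -/
open Finset

/-
Every vertex within distance `d - 2` of `A` lies in one of `|A| ≤ Δ` balls of radius `d - 2`,
and in a graph of maximum degree `Δ` such a ball has at most `1 + Δ + ⋯ + Δ^(d-2)` vertices.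
Together with `v` these are at most `1 + Δ + ⋯ + Δ^(d-1) = (Δ^d - 1)/(Δ - 1) < n` vertices,
so some vertex is neither `v` nor within distance `d - 2` of `A`.
-/

namespace SimpleGraph

variable {V : Type*} {G : SimpleGraph V}

theorem Reachable.exists_adj_dist_lt {u a : V} (h : G.Reachable u a) (hne : u ≠ a) :
    ∃ w, G.Adj u w ∧ G.dist w a < G.dist u a := by
  obtain ⟨p, hp⟩ := h.exists_walk_length_eq_dist
  cases p with
  | nil => exact absurd rfl hne
  | cons hadj q =>
    rw [Walk.length_cons] at hp
    exact ⟨_, hadj, hp ▸ Nat.lt_succ_of_le (dist_le q)⟩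

variable [Fintype V] [DecidableEq V] [DecidableRel G.Adj] {Δ : ℕ}

theorem card_biUnion_neighborFinset_le (hdeg : G.maxDegree ≤ Δ) (s : Finset V) :
    #(s.biUnion fun w ↦ G.neighborFinset w) ≤ #s * Δ :=
  card_biUnion_le_card_mul _ _ _ fun w _ ↦
    (card_neighborFinset_eq_degree G w).trans_le ((G.degree_le_maxDegree w).trans hdeg)

theorem Connected.filter_dist_le_succ_subset (hG : G.Connected) (a : V) (r : ℕ) :
    ({u | G.dist u a ≤ r + 1} : Finset V) ⊆
      insert a (({u | G.dist u a ≤ r} : Finset V).biUnion fun w ↦ G.neighborFinset w) := by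
  intro u hu
  rw [mem_filter] at hu
  rw [mem_insert, mem_biUnion]
  by_cases hua : u = a
  · exact .inl hua
  obtain ⟨w, hadj, hw⟩ := (hG.preconnected u a).exists_adj_dist_lt hua
  exact .inr ⟨w, mem_filter.2 ⟨mem_univ w, by omega⟩, (mem_neighborFinset _ _ _).2 hadj.symm⟩

theorem Connected.card_filter_dist_le_le_geom_sum (hG : G.Connected) (hdeg : G.maxDegree ≤ Δ)
    (a : V) (r : ℕ) : #{u | G.dist u a ≤ r} ≤ ∑ i ∈ range (r + 1), Δ ^ i := by
  induction r with
  | zero => simp [hG.dist_eq_zero_iff, filter_eq']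
  | succ r ih =>
    calc #{u | G.dist u a ≤ r + 1}
        ≤ #({u | G.dist u a ≤ r} : Finset V) * Δ + 1 :=
          (card_le_card (hG.filter_dist_le_succ_subset a r)).trans <|
            (card_insert_le _ _).trans <| by grw [card_biUnion_neighborFinset_le hdeg]
      _ ≤ (∑ i ∈ range (r + 1), Δ ^ i) * Δ + 1 := by gcongr
      _ = ∑ i ∈ range (r + 2), Δ ^ i := by rw [geom_sum_succ (n := r + 1), mul_comm]

end SimpleGraph

theorem Nat.geom_sum_lt_of_pow_sub_one_lt_mul {Δ d n : ℕ} (h : Δ ^ d - 1 < n * (Δ - 1)) :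
    ∑ i ∈ range d, Δ ^ i < n := by
  have hΔ : 1 ≤ Δ := by
    by_contra! hΔ
    simp [Nat.lt_one_iff.1 hΔ] at h
  rw [← geom_sum_mul_of_one_le hΔ] at h
  exact Nat.lt_of_mul_lt_mul_right h

theorem stmt_2_general (n Δ d : ℕ) (hd : 2 ≤ d)
    (U : SimpleGraph (Fin n)) [DecidableRel U.Adj]
    (hconn : U.Connected) (hdeg : U.maxDegree ≤ Δ)
    (hvol : Δ ^ d - 1 < n * (Δ - 1))
    (v : Fin n) (A : Finset (Fin n)) (hA : A.Nonempty) (hAcard : A.card ≤ Δ) :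
    ∃ u : Fin n, u ≠ v ∧ d - 2 < A.inf' hA (fun a => U.dist u a) := by
  set near := A.biUnion fun a ↦ ({u | U.dist u a ≤ d - 2} : Finset (Fin n))
  have hnear : #near ≤ Δ * ∑ i ∈ range (d - 1), Δ ^ i := by
    calc #near ≤ #A * ∑ i ∈ range (d - 2 + 1), Δ ^ i :=
          card_biUnion_le_card_mul _ _ _ fun a _ ↦
            hconn.card_filter_dist_le_le_geom_sum hdeg a (d - 2)
      _ ≤ Δ * ∑ i ∈ range (d - 1), Δ ^ i := by
          rw [show d - 2 + 1 = d - 1 by omega]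
          gcongr
  have hgeom : ∑ i ∈ range d, Δ ^ i = Δ * ∑ i ∈ range (d - 1), Δ ^ i + 1 := by
    rw [← geom_sum_succ, Nat.sub_add_cancel (by omega)]
  have hsmall : #(insert v near) < #(univ : Finset (Fin n)) := by
    rw [card_univ, Fintype.card_fin]
    have hgeom_lt := Nat.geom_sum_lt_of_pow_sub_one_lt_mul hvol
    have hinsert := card_insert_le v near
    omega
  obtain ⟨u, -, hu⟩ := exists_mem_notMem_of_card_lt_card hsmall
  rw [mem_insert, not_or] at hu
  refine ⟨u, hu.1, (lt_inf'_iff hA).2 fun a ha ↦ ?_⟩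
  by_contra! hle
  exact hu.2 (mem_biUnion.2 ⟨a, ha, mem_filter.2 ⟨mem_univ u, hle⟩⟩)

/-- In a connected graph with `n` vertices, diameter `d ≥ 2` and maximum degree
`Δ ≥ 2` satisfying `Δ^d - 1 < n(Δ-1)`, for any vertex `v` and any set `A` with
`1 ≤ |A| ≤ Δ` there is a vertex `u ≠ v` with `dist(u, A) > d - 2`. -/
theorem stmt_2 (n Δ d : ℕ) (hΔ : 2 ≤ Δ) (hd : 2 ≤ d)
    (U : SimpleGraph (Fin n)) [DecidableRel U.Adj]
    (hconn : U.Connected) (hdiam : U.diam = d) (hdeg : U.maxDegree ≤ Δ)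
    (hvol : Δ ^ d - 1 < n * (Δ - 1))
    (v : Fin n) (A : Finset (Fin n)) (hA : A.Nonempty) (hAcard : A.card ≤ Δ) :
    ∃ u : Fin n, u ≠ v ∧ d - 2 < A.inf' hA (fun a => U.dist u a) :=
  stmt_2_general n Δ d hd U hconn hdeg hvol v A hA hAcard
end

section
/- Let $G$ be a finite undirected graph and let $u, v, x, w$ be vertices, all in one connected component. Let $G_1 = G + uv$ (graph with edge $uv$ added) and $G_2 = G + xv$. Define $\mathrm{improve}_u(w) = \mathrm{dist}_G(u,w) - \mathrm{dist}_{G_1}(u,w)$ and $\mathrm{improve}_x(w) = \mathrm{dist}_G(x,w) - \mathrm{dist}_{G_2}(x,w)$. If $\mathrm{improve}_u(w) > 0$, then $\mathrm{improve}_x(w) \geq \mathrm{improve}_u(w) - \mathrm{dist}_G(u, x)$. -/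
/-!
A shortest `u`–`w` walk in `G + uv` that beats `dist_G(u, w)` must use the new edge, and it
can only profit from it by stepping `u → v` first, so it has length `1 + dist_G(v, w)`.
In `G + xv` the walk `x → v ⇝ w` has that same length, while `dist_G(x, w)` is at least
`dist_G(u, w) - dist_G(u, x)` by the triangle inequality.
-/

namespace SimpleGraph

variable {V : Type*} {G : SimpleGraph V}

/-- Follow the walk backwards from `w`: the last use of the new edge leaves from `u` or `v`. -/
lemma Walk.exists_walk_le_or_exists_walk_lt_of_sup_edge {u v w : V} :
    ∀ {a : V} (p : (G ⊔ fromEdgeSet {s(u, v)}).Walk a w),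
      (∃ q : G.Walk a w, q.length ≤ p.length) ∨
      (∃ q : G.Walk v w, q.length < p.length) ∨
      (∃ q : G.Walk u w, q.length < p.length)
  | _, .nil => .inl ⟨.nil, le_rfl⟩
  | _, .cons h p => by
    rw [Walk.length_cons]
    rw [sup_adj, fromEdgeSet_adj, Set.mem_singleton_iff, Sym2.eq_iff] at h
    rcases exists_walk_le_or_exists_walk_lt_of_sup_edge p with
      ⟨q, hq⟩ | ⟨q, hq⟩ | ⟨q, hq⟩
    · rcases h with hG | ⟨⟨rfl, rfl⟩ | ⟨rfl, rfl⟩, -⟩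
      · exact .inl ⟨.cons hG q, by rw [Walk.length_cons]; omega⟩
      · exact .inr <| .inl ⟨q, by omega⟩
      · exact .inr <| .inr ⟨q, by omega⟩
    · exact .inr <| .inl ⟨q, by omega⟩
    · exact .inr <| .inr ⟨q, by omega⟩

lemma dist_sup_edge_le {a b c : V} (hbc : G.Reachable b c) :
    (G ⊔ fromEdgeSet {s(a, b)}).dist a c ≤ G.dist b c + 1 := by
  by_cases hab : a = b
  · subst hab
    exact (hbc.dist_anti le_sup_left).trans (Nat.le_succ _)
  · obtain ⟨q, hq⟩ := hbc.exists_walk_length_eq_dist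
    have hadj : (G ⊔ fromEdgeSet {s(a, b)}).Adj a b := Or.inr ⟨rfl, hab⟩
    calc (G ⊔ fromEdgeSet {s(a, b)}).dist a c
        ≤ (Walk.cons hadj (q.mapLe le_sup_left)).length := dist_le _
      _ = G.dist b c + 1 := by simp [hq]

lemma dist_add_one_le_dist_sup_edge_of_lt {u v w : V}
    (h : (G ⊔ fromEdgeSet {s(u, v)}).dist u w < G.dist u w) :
    G.dist v w + 1 ≤ (G ⊔ fromEdgeSet {s(u, v)}).dist u w := by
  have huw : G.Reachable u w := Reachable.of_dist_ne_zero (by omega)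
  obtain ⟨p, hp⟩ := (huw.mono le_sup_left).exists_walk_length_eq_dist
  rcases Walk.exists_walk_le_or_exists_walk_lt_of_sup_edge (u := u) (v := v) p with
    ⟨q, hq⟩ | ⟨q, hq⟩ | ⟨q, hq⟩ <;>
  · have := dist_le q
    omega

end SimpleGraph

theorem stmt_6_general {V : Type*} (G : SimpleGraph V) (u v x w : V)
    (hconn : G.Reachable u v ∧ G.Reachable u x ∧ G.Reachable u w)
    (himp : ((G.dist u w : ℤ) - ((G ⊔ SimpleGraph.fromEdgeSet {s(u, v)}).dist u w : ℤ)) > 0) :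
    (G.dist x w : ℤ) - ((G ⊔ SimpleGraph.fromEdgeSet {s(x, v)}).dist x w : ℤ) ≥
      ((G.dist u w : ℤ) - ((G ⊔ SimpleGraph.fromEdgeSet {s(u, v)}).dist u w : ℤ))
        - (G.dist u x : ℤ) := by
  obtain ⟨huv, hux, huw⟩ := hconn
  have hdist_u : G.dist v w + 1 ≤ (G ⊔ SimpleGraph.fromEdgeSet {s(u, v)}).dist u w :=
    SimpleGraph.dist_add_one_le_dist_sup_edge_of_lt (by omega)
  have hdist_x : (G ⊔ SimpleGraph.fromEdgeSet {s(x, v)}).dist x w ≤ G.dist v w + 1 :=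
    SimpleGraph.dist_sup_edge_le (huv.symm.trans huw)
  have htri : G.dist u w ≤ G.dist u x + G.dist x w := hux.dist_triangle_left w
  omega

/-- If adding edge `uv` brings `u` strictly closer to `w`, then adding edge `xv`
brings `x` closer to `w` by at least as much, minus `dist(u,x)`. -/
theorem stmt_6 {V : Type*} [Fintype V] (G : SimpleGraph V) (u v x w : V)
    (hconn : G.Reachable u v ∧ G.Reachable u x ∧ G.Reachable u w)
    (himp : ((G.dist u w : ℤ) - ((G ⊔ SimpleGraph.fromEdgeSet {s(u, v)}).dist u w : ℤ)) > 0) :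
    (G.dist x w : ℤ) - ((G ⊔ SimpleGraph.fromEdgeSet {s(x, v)}).dist x w : ℤ) ≥
      ((G.dist u w : ℤ) - ((G ⊔ SimpleGraph.fromEdgeSet {s(u, v)}).dist u w : ℤ))
        - (G.dist u x : ℤ) :=
  stmt_6_general G u v x w hconn himp
end

section
/- Let $T$ be a finite tree with $n \geq 2$ vertices and diameter $d$, and let $P = v_0 v_1 \cdots v_d$ be a path realizing the diameter. For $1 \leq i \leq d$, let $A_i$ be the set of vertices of $T$ whose path to $P$ meets $P$ first at $v_i$ (with $v_i \in A_i$), and let $a(i) = |A_i| \geq 1$. Suppose there exist indices $1 \leq i_1 < i_2 < \cdots < i_t < d$ with $i_{j+1} \geq i_j + 1$ such that for all $1 \leq j < t$: $a(i_j + 1) \geq \sum_{k = i_j + 2}^{d} a(k)$. Then $n \geq 2^{t-1} - 1$, i.e., $t \leq 1 + \log_2(n + 1)$. -/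
/-! Along a geodesic `v 0, …, v d` of a tree the hang sets are pairwise disjoint: a vertex in
both `A i` and `A j` (`i < j`) is equally far from `v i` and `v j`, yet by uniqueness of paths it
is either closer to `v (i + 1)` or sees `v i` on its geodesic to `v j`. Hence any sum of their
sizes is at most `n`. The domination hypothesis says that the suffix sum starting at `idx j + 1`
is at least twice the one starting at `idx (j + 1) + 1`, so the suffix sum at `idx 1 + 1` is at
least `2 ^ (t - 1)`. -/

open Finset

/-- The set of vertices of the tree `T` hanging off the vertex `v i` of a path
`v 0, v 1, …, v d`: those vertices whose closest path vertex is `v i`. -/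
noncomputable def hangSet {V : Type*} [Fintype V] (T : SimpleGraph V) (d : ℕ)
    (v : ℕ → V) (i : ℕ) : Finset V :=
  Finset.univ.filter fun x => ∀ j ≤ d, T.dist x (v i) ≤ T.dist x (v j)

namespace SimpleGraph

variable {V : Type*} {G : SimpleGraph V}

theorem Walk.dist_add_dist_le_length {a b u : V} (w : G.Walk a b) (hu : u ∈ w.support) :
    G.dist a u + G.dist u b ≤ w.length := by
  classical
  calc G.dist a u + G.dist u b ≤ (w.takeUntil u hu).length + (w.dropUntil u hu).length :=
        add_le_add (dist_le _) (dist_le _)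
    _ = w.length := by rw [← Walk.length_append, Walk.take_spec]

theorem IsAcyclic.edges_subset_of_isPath (hG : G.IsAcyclic) {a b : V} {p : G.Walk a b}
    (hp : p.IsPath) (w : G.Walk a b) : p.edges ⊆ w.edges := by
  classical
  have hbypass : w.bypass = p :=
    congrArg Subtype.val ((hG.subsingleton_path a b).elim ⟨w.bypass, w.bypass_isPath⟩ ⟨p, hp⟩)
  exact hbypass ▸ w.edges_bypass_subset_edges

theorem IsTree.dist_add_one_le_or_dist_add_le (hG : G.IsTree) {a a' b : V} (hadj : G.Adj a a')
    (hab : G.dist a b = G.dist a' b + 1) (x : V) :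
    G.dist x a' + 1 ≤ G.dist x a ∨ G.dist x a + G.dist a b ≤ G.dist x b := by
  obtain ⟨p, hp⟩ := hG.connected.exists_walk_length_eq_dist x a
  obtain ⟨q, hq⟩ := hG.connected.exists_walk_length_eq_dist x b
  obtain ⟨r, hr⟩ := hG.connected.exists_walk_length_eq_dist a' b
  have hpath : (Walk.cons hadj r).IsPath :=
    Walk.isPath_of_length_eq_dist _ (by rw [Walk.length_cons, hr, hab])
  have hedge : s(a, a') ∈ (p.reverse.append q).edges :=
    hG.isAcyclic.edges_subset_of_isPath hpath _ (by simp)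
  rw [Walk.edges_append, List.mem_append, Walk.edges_reverse, List.mem_reverse] at hedge
  rcases hedge with hedge | hedge
  · have h := p.dist_add_dist_le_length (p.snd_mem_support_of_mem_edges hedge)
    rw [dist_eq_one_iff_adj.mpr hadj.symm] at h
    omega
  · have h := q.dist_add_dist_le_length (q.fst_mem_support_of_mem_edges hedge)
    omega

variable {d : ℕ} {v : ℕ → V}

theorem dist_le_sub_of_adj_succ (hadj : ∀ k < d, G.Adj (v k) (v (k + 1))) {i j : ℕ}
    (hij : i ≤ j) (hjd : j ≤ d) : G.dist (v i) (v j) ≤ j - i := by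
  induction j, hij using Nat.le_induction with
  | base => simp
  | succ j hij ih =>
    have hstep := (hadj j (by omega)).reachable.dist_triangle_right (v i)
    rw [dist_eq_one_iff_adj.mpr (hadj j (by omega))] at hstep
    have := ih (by omega)
    omega

theorem dist_eq_sub_of_adj_succ (hG : G.Connected) (hadj : ∀ k < d, G.Adj (v k) (v (k + 1)))
    (hd : G.dist (v 0) (v d) = d) {i j : ℕ} (hij : i ≤ j) (hjd : j ≤ d) :
    G.dist (v i) (v j) = j - i := by
  have h0i := dist_le_sub_of_adj_succ hadj (Nat.zero_le i) (hij.trans hjd)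
  have hij' := dist_le_sub_of_adj_succ hadj hij hjd
  have hjd' := dist_le_sub_of_adj_succ hadj hjd le_rfl
  have := hG.dist_triangle (u := v 0) (v := v i) (w := v d)
  have := hG.dist_triangle (u := v i) (v := v j) (w := v d)
  omega

end SimpleGraph

section HangSet

variable {V : Type*} [Fintype V] {T : SimpleGraph V} {d : ℕ} {v : ℕ → V}

theorem mem_hangSet_self (i : ℕ) : v i ∈ hangSet T d v i := by
  simp [hangSet]

theorem disjoint_hangSet_of_lt (hT : T.IsTree)
    (hgeo : ∀ i j, i ≤ j → j ≤ d → T.dist (v i) (v j) = j - i) {i j : ℕ} (hij : i < j)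
    (hjd : j ≤ d) : Disjoint (hangSet T d v i) (hangSet T d v j) := by
  rw [Finset.disjoint_left]
  intro x hxi hxj
  simp only [hangSet, mem_filter, mem_univ, true_and] at hxi hxj
  have hadj : T.Adj (v i) (v (i + 1)) :=
    SimpleGraph.dist_eq_one_iff_adj.mp (by rw [hgeo i (i + 1) (by omega) (by omega)]; omega)
  have hvij : T.dist (v i) (v j) = T.dist (v (i + 1)) (v j) + 1 := by
    rw [hgeo i j (by omega) hjd, hgeo (i + 1) j (by omega) hjd]; omega
  rcases hT.dist_add_one_le_or_dist_add_le hadj hvij x with h | h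
  · have := hxi (i + 1) (by omega)
    omega
  · have := hxj i (by omega)
    have := hgeo i j hij.le hjd
    omega

theorem sum_card_hangSet_le_card (hT : T.IsTree)
    (hgeo : ∀ i j, i ≤ j → j ≤ d → T.dist (v i) (v j) = j - i) (s : Finset ℕ)
    (hs : ∀ k ∈ s, k ≤ d) : ∑ k ∈ s, (hangSet T d v k).card ≤ Fintype.card V := by
  classical
  rw [← card_biUnion]
  · exact card_le_univ _
  · intro i hi j hj hij
    rcases hij.lt_or_gt with h | h
    · exact disjoint_hangSet_of_lt hT hgeo h (hs j hj)
    · exact (disjoint_hangSet_of_lt hT hgeo h (hs i hi)).symm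

end HangSet

theorem two_pow_le_sum_Icc_of_dominating (a : ℕ → ℕ) {d t : ℕ} {idx : ℕ → ℕ}
    (hmono : StrictMonoOn idx (Set.Icc 1 t)) (hlast : idx t < d) (ha : 1 ≤ a d)
    (hdom : ∀ j, 1 ≤ j → j < t → ∑ k ∈ Icc (idx j + 2) d, a k ≤ a (idx j + 1))
    {j : ℕ} (hj : 1 ≤ j) (hjt : j ≤ t) : 2 ^ (t - j) ≤ ∑ k ∈ Icc (idx j + 1) d, a k := by
  induction hjt using Nat.decreasingInduction with
  | self =>
    rw [Nat.sub_self, pow_zero]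
    exact ha.trans (single_le_sum (fun _ _ ↦ Nat.zero_le _) (mem_Icc.mpr ⟨hlast, le_rfl⟩))
  | of_succ j hjt ih =>
    have hlt : idx j < idx (j + 1) := hmono ⟨hj, hjt.le⟩ ⟨by omega, hjt⟩ (by omega)
    have hle : idx (j + 1) ≤ idx t := hmono.monotoneOn ⟨by omega, hjt⟩ ⟨by omega, le_rfl⟩ hjt
    have hsplit :
        ∑ k ∈ Icc (idx j + 1) d, a k = a (idx j + 1) + ∑ k ∈ Icc (idx j + 2) d, a k := by
      rw [← insert_Icc_add_one_left_eq_Icc (by omega : idx j + 1 ≤ d),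
        sum_insert (by simp)]
      rfl
    have htail : ∑ k ∈ Icc (idx (j + 1) + 1) d, a k ≤ ∑ k ∈ Icc (idx j + 2) d, a k :=
      sum_le_sum_of_subset (Icc_subset_Icc_left (by omega))
    have hpow : 2 ^ (t - j) = 2 * 2 ^ (t - (j + 1)) := by
      rw [← pow_succ']; congr 1; omega
    have := ih (by omega)
    have := hdom j hj hjt
    omega

theorem stmt_13_general {V : Type*} [Fintype V] (T : SimpleGraph V) (hT : T.IsTree)
    (n d : ℕ) (hn : Fintype.card V = n)
    (v : ℕ → V) (hpath : ∀ i < d, T.Adj (v i) (v (i + 1)))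
    (hreal : T.dist (v 0) (v d) = d)
    (t : ℕ) (idx : ℕ → ℕ) (hmono : StrictMonoOn idx (Set.Icc 1 t))
    (hlast : idx t < d)
    (hdom : ∀ j, 1 ≤ j → j < t →
      (∑ k ∈ Finset.Icc (idx j + 2) d, (hangSet T d v k).card)
        ≤ (hangSet T d v (idx j + 1)).card) :
    2 ^ (t - 1) - 1 ≤ n := by
  rcases Nat.eq_zero_or_pos t with rfl | ht
  · simp
  have hgeo : ∀ i j, i ≤ j → j ≤ d → T.dist (v i) (v j) = j - i := fun _ _ hij hjd ↦
    SimpleGraph.dist_eq_sub_of_adj_succ hT.connected hpath hreal hij hjd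
  calc 2 ^ (t - 1) - 1 ≤ ∑ k ∈ Icc (idx 1 + 1) d, (hangSet T d v k).card :=
        (Nat.sub_le _ _).trans <| two_pow_le_sum_Icc_of_dominating _ hmono hlast
          (card_pos.mpr ⟨_, mem_hangSet_self d⟩) hdom le_rfl ht
    _ ≤ n := hn ▸ sum_card_hangSet_le_card hT hgeo _ fun _ hk ↦ (mem_Icc.mp hk).2

/-- Equilibrium condition along a diametral path of a tree forces the number of
dominating indices to be logarithmic: `n ≥ 2^(t-1) - 1`. -/
theorem stmt_13 {V : Type*} [Fintype V] (T : SimpleGraph V) (hT : T.IsTree)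
    (n d : ℕ) (hn : Fintype.card V = n) (hn2 : 2 ≤ n)
    (hdiam : T.diam = d)
    (v : ℕ → V) (hpath : ∀ i < d, T.Adj (v i) (v (i + 1)))
    (hinj : ∀ i ≤ d, ∀ j ≤ d, v i = v j → i = j)
    (hreal : T.dist (v 0) (v d) = d)
    (t : ℕ) (idx : ℕ → ℕ) (hmono : StrictMonoOn idx (Set.Icc 1 t))
    (h1 : 1 ≤ idx 1) (hlast : idx t < d) (ht : 1 ≤ t)
    (hdom : ∀ j, 1 ≤ j → j < t →
      (∑ k ∈ Finset.Icc (idx j + 2) d, (hangSet T d v k).card)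
        ≤ (hangSet T d v (idx j + 1)).card) :
    2 ^ (t - 1) - 1 ≤ n :=
  stmt_13_general T hT n d hn v hpath hreal t idx hmono hlast hdom
end

section
/- Let $G$ be a finite connected undirected graph on $n$ vertices and $r \geq 1$ an integer. Suppose a vertex $u$ satisfies: the ball $B_{r+1}(u) = \{v : \mathrm{dist}(u,v) \leq r+1\}$ induces a subgraph containing a cycle. Then there exists an edge $xy$ of $G$ with $\mathrm{dist}(x, u) \leq r + 1$ such that removing $xy$ keeps the graph connected and increases each distance $\mathrm{dist}(x, w)$ (over all vertices $w$) by at most $1 + 2r$; in particular $\sum_w \mathrm{dist}_{G - xy}(x, w) \leq \sum_w \mathrm{dist}_G(x, w) + n(1 + 2r)$. -/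
/-!
Take a vertex `v` of the cycle farthest from `u`; its two cycle-neighbours are no farther from
`u`. A shortest `u`–`v` path ends in a single edge, so for one of these neighbours `y` it avoids
`vy`; a shortest `u`–`y` path avoids `vy` too, since `y` is not farther than `v`. Together they
form a detour from `v` to `y` of length at most `2 dist(u, v) ≤ 2r + 2` avoiding `vy`, and
substituting it for `vy` in a shortest path, which uses `vy` at most once, costs at most `2r + 1`.
-/

namespace SimpleGraph

variable {V : Type*} {G : SimpleGraph V}

namespace Walk

lemma dist_lt_of_mem_support {u t w : V} (p : G.Walk u t) (hp : p.length = G.dist u t)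
    (hw : w ∈ p.support) (hwt : w ≠ t) : G.dist u w < G.dist u t := by
  classical
  exact hp ▸ (dist_le _).trans_lt (p.length_takeUntil_lt_length hw hwt)

/-- Replacing every traversal of `s(x, y)` by the detour `D` turns a walk of `G` into one
avoiding that edge. -/
lemma exists_walk_deleteEdges_of_detour [DecidableEq V] {x y : V}
    (D : (G.deleteEdges {s(x, y)}).Walk x y) {a b : V} (p : G.Walk a b) :
    ∃ q : (G.deleteEdges {s(x, y)}).Walk a b,
      q.length + p.edges.count s(x, y) ≤ p.length + p.edges.count s(x, y) * D.length := by
  induction p with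
  | nil => exact ⟨nil, by simp⟩
  | @cons a c b hac p ih =>
    obtain ⟨q, hq⟩ := ih
    by_cases he : s(a, c) = s(x, y)
    · obtain ⟨D', hD'⟩ : ∃ D' : (G.deleteEdges {s(x, y)}).Walk a c, D'.length = D.length := by
        rcases Sym2.eq_iff.mp he with ⟨rfl, rfl⟩ | ⟨rfl, rfl⟩
        · exact ⟨D, rfl⟩
        · exact ⟨D.reverse, D.length_reverse⟩
      refine ⟨D'.append q, ?_⟩
      simp only [length_append, length_cons, edges_cons, List.count_cons, he, hD']
      simp only [beq_self_eq_true, if_true]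
      linarith
    · refine ⟨cons (by simp [hac, he]) q, ?_⟩
      simp [he]
      omega

lemma exists_detour {u v y : V} (P : G.Walk u v) (hP : P.length = G.dist u v)
    (hPy : s(v, y) ∉ P.edges) (hvy : G.Adj v y) (hy : G.dist u y ≤ G.dist u v) :
    ∃ D : (G.deleteEdges {s(v, y)}).Walk v y, D.length ≤ 2 * G.dist u v := by
  obtain ⟨Q, hQ⟩ := (P.reachable.trans hvy.reachable).exists_walk_length_eq_dist
  have hQy : s(v, y) ∉ Q.edges := fun h =>
    (Q.dist_lt_of_mem_support hQ (Q.fst_mem_support_of_mem_edges h) hvy.ne).not_ge hy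
  refine ⟨(P.toDeleteEdge _ hPy).reverse.append (Q.toDeleteEdge _ hQy), ?_⟩
  simp
  omega

lemma IsCycle.exists_adj_adj_le {α : Type*} [LinearOrder α] {w : V} {c : G.Walk w w}
    (hc : c.IsCycle) (f : V → α) :
    ∃ v a b, a ≠ b ∧ G.Adj v a ∧ G.Adj v b ∧ f a ≤ f v ∧ f b ≤ f v := by
  classical
  obtain ⟨v, hv, hmax⟩ := c.support.toFinset.exists_max_image f ⟨w, by simp⟩
  rw [List.mem_toFinset] at hv
  have hc' : (c.rotate v hv).IsCycle := hc.rotate hv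
  have hle : ∀ x ∈ (c.rotate v hv).support, f x ≤ f v := fun x hx =>
    hmax x (List.mem_toFinset.2 ((mem_support_rotate_iff ..).1 hx))
  exact ⟨v, _, _, hc'.snd_ne_penultimate, adj_snd hc'.not_nil, (adj_penultimate hc'.not_nil).symm,
    hle _ (getVert_mem_support ..), hle _ (getVert_mem_support ..)⟩

end Walk

lemma Reachable.dist_deleteEdges_le_add {x y a b : V} {k : ℕ} (hab : G.Reachable a b)
    (D : (G.deleteEdges {s(x, y)}).Walk x y) (hD : D.length ≤ k + 1) :
    (G.deleteEdges {s(x, y)}).dist a b ≤ G.dist a b + k := by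
  classical
  obtain ⟨p, hp, hlen⟩ := hab.exists_path_of_dist
  obtain ⟨q, hq⟩ := Walk.exists_walk_deleteEdges_of_detour D p
  have hcount : p.edges.count s(x, y) ≤ 1 := List.nodup_iff_count_le_one.mp hp.edges_nodup _
  have := dist_le q
  interval_cases p.edges.count s(x, y) <;> omega

lemma Reachable.exists_adj_detour {u v a b : V} (huv : G.Reachable u v) (hab : a ≠ b)
    (hva : G.Adj v a) (hvb : G.Adj v b) (ha : G.dist u a ≤ G.dist u v)
    (hb : G.dist u b ≤ G.dist u v) :
    ∃ y, G.Adj v y ∧ ∃ D : (G.deleteEdges {s(v, y)}).Walk v y, D.length ≤ 2 * G.dist u v := by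
  obtain ⟨P, hP, hlen⟩ := huv.exists_path_of_dist
  by_cases haP : s(v, a) ∈ P.edges
  · have hbP : s(v, b) ∉ P.edges := fun hbP =>
      hab ((hP.eq_penultimate_of_mem_edges haP).trans (hP.eq_penultimate_of_mem_edges hbP).symm)
    exact ⟨b, hvb, P.exists_detour hlen hbP hvb hb⟩
  · exact ⟨a, hva, P.exists_detour hlen haP hva ha⟩

end SimpleGraph

theorem stmt_14_general (n r : ℕ) (G : SimpleGraph (Fin n))
    (hconn : G.Connected) (u : Fin n)
    (hcyc : ∃ (a : {v : Fin n // G.dist u v ≤ r + 1})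
      (p : (G.induce {v : Fin n | G.dist u v ≤ r + 1}).Walk a a), p.IsCycle) :
    ∃ x y : Fin n, G.Adj x y ∧ G.dist x u ≤ r + 1 ∧
      (G.deleteEdges {s(x, y)}).Connected ∧
      (∀ w : Fin n, (G.deleteEdges {s(x, y)}).dist x w ≤ G.dist x w + (1 + 2 * r)) ∧
      (∑ w : Fin n, (G.deleteEdges {s(x, y)}).dist x w)
        ≤ (∑ w : Fin n, G.dist x w) + n * (1 + 2 * r) := by
  obtain ⟨_, c, hc⟩ := hcyc
  obtain ⟨v, a, b, hab, hva, hvb, ha, hb⟩ := hc.exists_adj_adj_le (fun w => G.dist u w)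
  obtain ⟨y, hvy, D, hD⟩ := (hconn u v).exists_adj_detour (Subtype.coe_ne_coe.2 hab)
    hva hvb ha hb
  have hv : G.dist u v ≤ r + 1 := v.2
  have hDr : D.length ≤ 2 * r + 1 + 1 := by omega
  have hdist (w : Fin n) : (G.deleteEdges {s(v.1, y)}).dist v w ≤ G.dist v w + (1 + 2 * r) :=
    (add_comm 1 (2 * r)) ▸ (hconn v w).dist_deleteEdges_le_add D hDr
  refine ⟨v, y, hvy, G.dist_comm ▸ hv, hconn.connected_delete_edge_of_not_isBridge
    (not_not.2 ⟨D⟩), hdist, ?_⟩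
  calc ∑ w, (G.deleteEdges {s(v.1, y)}).dist v w
      ≤ ∑ w, (G.dist v w + (1 + 2 * r)) := Finset.sum_le_sum fun w _ => hdist w
    _ = (∑ w, G.dist v w) + n * (1 + 2 * r) := by simp [Finset.sum_add_distrib]

/-- If the ball of radius `r+1` around `u` in a connected graph induces a subgraph
containing a cycle, then there is an edge `xy` with `dist(x,u) ≤ r+1` whose removal
keeps the graph connected and increases every distance from `x` by at most `1+2r`. -/
theorem stmt_14 (n r : ℕ) (hr : 1 ≤ r) (G : SimpleGraph (Fin n))
    (hconn : G.Connected) (u : Fin n)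
    (hcyc : ∃ (a : {v : Fin n // G.dist u v ≤ r + 1})
      (p : (G.induce {v : Fin n | G.dist u v ≤ r + 1}).Walk a a), p.IsCycle) :
    ∃ x y : Fin n, G.Adj x y ∧ G.dist x u ≤ r + 1 ∧
      (G.deleteEdges {s(x, y)}).Connected ∧
      (∀ w : Fin n, (G.deleteEdges {s(x, y)}).dist x w ≤ G.dist x w + (1 + 2 * r)) ∧
      (∑ w : Fin n, (G.deleteEdges {s(x, y)}).dist x w)
        ≤ (∑ w : Fin n, G.dist x w) + n * (1 + 2 * r) :=
  stmt_14_general n r G hconn u hcyc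
end

section
/- Let $n \geq 3$ and let $c > 0$ be a real constant. Let $f : \mathbb{N} \to \mathbb{N}$ be a nondecreasing function with $f(k) \geq \min(k, n)$ for all $k$, and suppose that for all $k \geq 1$: $f(4k) \geq \min\left(\frac{n+1}{2},\ \frac{k \cdot f(k)}{c \log_2 n}\right)$. Then the smallest $K$ with $f(K) > n/2$ satisfies $K \leq 2^{C\sqrt{\log_2 n}}$ for some constant $C$ depending only on $c$. -/
/-!
Put `L = c · log₂ n` and start at `k₀ = ⌈2L⌉`. Until `f` reaches the threshold `(n+1)/2`,
the step `k ↦ 4k` from `k = 4^i k₀` multiplies the lower bound on `f` by `k / L ≥ 2 · 4^i`,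
so `f (4^i k₀) ≥ 2^(i²) k₀`. At `i = ⌈√(log₂ n)⌉` this exceeds `n`, hence
`K ≤ 4^i k₀ = 2^O(√(log₂ n))`; the constant comes from `k₀ ≤ 2c · log₂ n + 1`.
-/

open Real

theorem min_le_apply_four_pow_mul {f : ℕ → ℝ} {A L : ℝ} {k₀ : ℕ} (hA : 0 ≤ A) (hL : 0 < L)
    (hk₀ : 2 * L ≤ k₀) (hrec : ∀ k : ℕ, 1 ≤ k → min A (k * f k / L) ≤ f (4 * k))
    (h₀ : min A k₀ ≤ f k₀) (i : ℕ) :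
    min A (2 ^ (i ^ 2) * k₀) ≤ f (4 ^ i * k₀) := by
  induction i with
  | zero => simpa using h₀
  | succ i ih =>
    set k := 4 ^ i * k₀ with hk
    have hk₀_pos : (0 : ℝ) < k₀ := by linarith
    have hk_pos : 1 ≤ k := Nat.mul_pos (by positivity) (by exact_mod_cast hk₀_pos)
    have h4i : (1 : ℝ) ≤ 4 ^ i := one_le_pow₀ (by norm_num)
    have hkL : 2 * 4 ^ i ≤ (k : ℝ) / L := by
      rw [le_div_iff₀ hL, hk]
      push_cast
      nlinarith
    have hstep : min A (2 ^ ((i + 1) ^ 2) * k₀) ≤ k * f k / L :=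
      calc min A (2 ^ ((i + 1) ^ 2) * k₀)
          ≤ 2 * 4 ^ i * min A (2 ^ (i ^ 2) * k₀) := by
            rw [mul_min_of_nonneg _ _ (by positivity)]
            refine min_le_min (by nlinarith) (le_of_eq ?_)
            rw [show (4 : ℝ) = 2 ^ 2 by norm_num, ← pow_mul]
            ring
        _ ≤ k / L * f k := mul_le_mul hkL ih (by positivity) (by positivity)
        _ = k * f k / L := by ring
    calc min A (2 ^ ((i + 1) ^ 2) * k₀) ≤ min A (k * f k / L) := le_min (min_le_left _ _) hstep
      _ ≤ f (4 * k) := hrec k hk_pos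
      _ = f (4 ^ (i + 1) * k₀) := by rw [hk, pow_succ]; ring_nf

theorem le_two_pow_ceil_sqrt_logb_sq {x : ℝ} (hx : 1 ≤ x) :
    x ≤ 2 ^ (⌈√(logb 2 x)⌉₊ ^ 2) := by
  have hlog : 0 ≤ logb 2 x := logb_nonneg one_lt_two hx
  have hle : logb 2 x ≤ ((⌈√(logb 2 x)⌉₊ ^ 2 : ℕ) : ℝ) := by
    push_cast
    calc logb 2 x = √(logb 2 x) ^ 2 := (sq_sqrt hlog).symm
      _ ≤ _ := pow_le_pow_left₀ (sqrt_nonneg _) (Nat.le_ceil _) 2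
  calc x = 2 ^ logb 2 x := (rpow_logb two_pos (by norm_num) (by linarith)).symm
    _ ≤ 2 ^ (((⌈√(logb 2 x)⌉₊ ^ 2 : ℕ)) : ℝ) := rpow_le_rpow_of_exponent_le one_le_two hle
    _ = _ := rpow_natCast 2 _

theorem four_pow_ceil_mul_le {a s : ℝ} {k : ℕ} (ha : 0 ≤ a) (hs : 1 ≤ s)
    (hk : (k : ℝ) ≤ a * s ^ 2 + 1) :
    4 ^ ⌈s⌉₊ * (k : ℝ) ≤ 2 ^ ((logb 2 (a + 1) + 8) * s) := by
  set i := ⌈s⌉₊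
  have hsi : s ≤ i := Nat.le_ceil s
  have his : (i : ℝ) ≤ 2 * s := by linarith [Nat.ceil_lt_add_one (by linarith : 0 ≤ s)]
  have hsq : (i : ℝ) ^ 2 ≤ 4 ^ i := by
    rw [show (4 : ℝ) ^ i = ((2 ^ i : ℕ) : ℝ) ^ 2 by
      push_cast; rw [← pow_mul, mul_comm, pow_mul]; norm_num]
    exact pow_le_pow_left₀ (Nat.cast_nonneg _) (by exact_mod_cast (Nat.lt_two_pow_self).le) 2
  have hk' : (k : ℝ) ≤ (a + 1) * 4 ^ i :=
    calc (k : ℝ) ≤ a * s ^ 2 + 1 := hk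
      _ ≤ (a + 1) * (i : ℝ) ^ 2 := by nlinarith [pow_le_pow_left₀ (by linarith) hsi 2]
      _ ≤ (a + 1) * 4 ^ i := by gcongr
  have hlog : 0 ≤ logb 2 (a + 1) := logb_nonneg one_lt_two (by linarith)
  calc 4 ^ i * (k : ℝ) ≤ 4 ^ i * ((a + 1) * 4 ^ i) := by gcongr
    _ = 2 ^ logb 2 (a + 1) * 2 ^ ((4 * i : ℕ) : ℝ) := by
      rw [rpow_logb two_pos (by norm_num) (by linarith), rpow_natCast, pow_mul,
        show (4 : ℝ) = 2 ^ 2 by norm_num, ← pow_mul, ← pow_mul]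
      ring
    _ = 2 ^ (logb 2 (a + 1) + 4 * i) := by rw [← rpow_add two_pos]; push_cast; rfl
    _ ≤ 2 ^ ((logb 2 (a + 1) + 8) * s) :=
      rpow_le_rpow_of_exponent_le one_le_two (by nlinarith)

/-- Abstract growth recursion: if a monotone ball-size function satisfies
`f k ≥ min k n` and the expansion inequality
`f(4k) ≥ min((n+1)/2, k·f(k)/(c·log₂ n))`, then the smallest `K` with
`f K > n/2` satisfies `K ≤ 2^(C√(log₂ n))` for a constant `C` depending only
on `c`. -/
theorem stmt_15 (c : ℝ) (hc : 0 < c) :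
    ∃ C : ℝ, 0 < C ∧ ∀ n : ℕ, 3 ≤ n → ∀ f : ℕ → ℕ, Monotone f →
      (∀ k : ℕ, min k n ≤ f k) →
      (∀ k : ℕ, 1 ≤ k →
        min (((n : ℝ) + 1) / 2) ((k * f k : ℝ) / (c * Real.logb 2 n)) ≤ (f (4 * k) : ℝ)) →
      ∀ K : ℕ, ((f K : ℝ) > (n : ℝ) / 2 ∧ ∀ j < K, ¬ ((f j : ℝ) > (n : ℝ) / 2)) →
        (K : ℝ) ≤ 2 ^ (C * Real.sqrt (Real.logb 2 n)) := by
  have hlog_c : 0 ≤ logb 2 (2 * c + 1) := logb_nonneg one_lt_two (by linarith)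
  refine ⟨logb 2 (2 * c + 1) + 8, by positivity, ?_⟩
  intro n hn f _ hmin hrec K ⟨_, hKmin⟩
  have hn3 : (3 : ℝ) ≤ n := by exact_mod_cast hn
  have hlog : 1 ≤ logb 2 n :=
    (le_logb_iff_rpow_le one_lt_two (by linarith)).2 (by norm_num; linarith)
  set s := √(logb 2 n)
  have hs : 1 ≤ s := one_le_sqrt.2 hlog
  set L := c * logb 2 n
  have hL : 0 < L := by positivity
  set k₀ := ⌈2 * L⌉₊
  have hk₀ : 2 * L ≤ k₀ := Nat.le_ceil _
  have hk₀_le : (k₀ : ℝ) ≤ 2 * c * s ^ 2 + 1 := by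
    rw [sq_sqrt (by linarith)]
    linarith [Nat.ceil_lt_add_one (by positivity : 0 ≤ 2 * L)]
  have h₀ : min (((n : ℝ) + 1) / 2) k₀ ≤ f k₀ :=
    calc min (((n : ℝ) + 1) / 2) k₀ ≤ ((min k₀ n : ℕ) : ℝ) := by
          rw [Nat.cast_min]
          exact le_min (min_le_right _ _) ((min_le_left _ _).trans (by linarith))
      _ ≤ f k₀ := by exact_mod_cast hmin k₀
  set i := ⌈s⌉₊
  have hgrowth :=
    min_le_apply_four_pow_mul (f := fun k ↦ (f k : ℝ)) (by positivity) hL hk₀ hrec h₀ i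
  have hbig : (n : ℝ) / 2 < f (4 ^ i * k₀) := by
    have hn_le : (n : ℝ) ≤ 2 ^ (i ^ 2) := le_two_pow_ceil_sqrt_logb_sq (by linarith)
    have hk₀_one : (1 : ℝ) ≤ k₀ := by exact_mod_cast Nat.ceil_pos.2 (by positivity : 0 < 2 * L)
    refine lt_of_lt_of_le (lt_min (by linarith) ?_) hgrowth
    nlinarith
  have hK_le : K ≤ 4 ^ i * k₀ := not_lt.1 fun h ↦ hKmin _ h hbig
  calc (K : ℝ) ≤ ((4 ^ i * k₀ : ℕ) : ℝ) := by exact_mod_cast hK_le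
    _ = 4 ^ i * k₀ := by push_cast; rfl
    _ ≤ _ := four_pow_ceil_mul_le (by positivity) hs hk₀_le
end
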